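/- In the directed inhomogeneous random graph model with random exposures, conditioned on bank 1 having type t, let f_X^{(N)}(k | t) := E[e^{i k X̄₁}] be the characteristic function of the interbank debt X̄₁ := Σ_{w=2}^N I_{w1} Ω_{w1}, and define f_X(k | t) := exp( Σ_{t'∈[M]} P(t') κ(t',t) ( f_Ω(k | t',t) − 1 ) ). Then there exists a constant C, depending only on M, P and κ (not on N, k or t), such that for all N ≥ 2 with max_{s,s'} κ(s,s') ≤ N−1, all k ∈ ℝ and all t ∈ [M]: | f_X^{(N)}(k | t) − f_X(k | t) | ≤ C/(N−1). -/

import Mathlib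

/-!
Given the types, the summands `I_{w1} Ω_{w1}` are i.i.d., so the characteristic function of
`X̄₁` is the `n`-th power (`n = N - 1`) of the characteristic function `z` of one summand, a
`P`-mixture of thinned characteristic functions `1 - κ/n + (κ/n) f_Ω`. Hence `z` lies in the
closed unit disc, `n (z - 1)` is exactly the exponent of `f_X`, and `‖z - 1‖ = O(1/n)`. The
Poisson-type estimate `‖z ^ n - exp (n (z - 1))‖ ≤ 2 n ‖z - 1‖ ^ 2` on the unit disc, which
comes from `‖a ^ n - b ^ n‖ ≤ n ‖a - b‖` and a second-order bound on `exp`, then gives the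
rate `1/n`.
-/

open MeasureTheory ProbabilityTheory

/-- The uniform distribution on `[0,1]`. -/
noncomputable def unif01 : Measure ℝ := volume.restrict (Set.Icc (0:ℝ) 1)

/-- The law of a bank type: the discrete measure on `[M]` with mass function `P`. -/
noncomputable def typeMeasure (M : ℕ) (P : Fin M → ℝ) : Measure (Fin M) :=
  ∑ s, ENNReal.ofReal (P s) • Measure.dirac s

/-- The joint law of one triple `(T_w, U_w, Ω_{w1})`: first draw the type `s ~ P`, then,
conditionally on `s`, draw `U_w ~ Uniform[0,1]` and `Ω_{w1} ~ ν(·∣s,t)` independently. -/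
noncomputable def coordLaw (M : ℕ) (P : Fin M → ℝ) (ν : Fin M → Fin M → Measure ℝ)
    (t : Fin M) : Measure (Fin M × ℝ × ℝ) :=
  (typeMeasure M P).bind
    (fun s => Measure.map (fun p : ℝ × ℝ => (s, p)) (unif01.prod (ν s t)))

theorem norm_pow_sub_pow_le_mul_norm_sub {R : Type*} [SeminormedRing R] [NormOneClass R]
    {a b : R} (ha : ‖a‖ ≤ 1) (hb : ‖b‖ ≤ 1) (n : ℕ) : ‖a ^ n - b ^ n‖ ≤ n * ‖a - b‖ := by
  induction n with
  | zero => simp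
  | succ n ih =>
    have hbn : ‖b ^ n‖ ≤ 1 := (norm_pow_le b n).trans (pow_le_one₀ (norm_nonneg b) hb)
    calc ‖a ^ (n + 1) - b ^ (n + 1)‖ = ‖a * (a ^ n - b ^ n) + (a - b) * b ^ n‖ := by
          rw [pow_succ', pow_succ']; congr 1; noncomm_ring
      _ ≤ ‖a‖ * ‖a ^ n - b ^ n‖ + ‖a - b‖ * ‖b ^ n‖ :=
          (norm_add_le _ _).trans (add_le_add (norm_mul_le _ _) (norm_mul_le _ _))
      _ ≤ 1 * (n * ‖a - b‖) + ‖a - b‖ * 1 := by gcongr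
      _ = (n + 1 : ℕ) * ‖a - b‖ := by push_cast; ring

namespace Complex

theorem norm_exp_sub_one_le_one {z : ℂ} (hz : ‖z‖ ≤ 1) : ‖exp (z - 1)‖ ≤ 1 := by
  rw [norm_exp, Real.exp_le_one_iff, sub_re, one_re, sub_nonpos]
  exact (re_le_norm z).trans hz

theorem norm_sub_exp_sub_one_le {z : ℂ} (hz : ‖z‖ ≤ 1) :
    ‖z - exp (z - 1)‖ ≤ 2 * ‖z - 1‖ ^ 2 := by
  rcases le_or_gt ‖z - 1‖ 1 with hsmall | hlarge
  · calc ‖z - exp (z - 1)‖ = ‖exp (z - 1) - 1 - (z - 1)‖ := by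
          rw [← norm_neg]; congr 1; ring
      _ ≤ ‖z - 1‖ ^ 2 := norm_exp_sub_one_sub_id_le hsmall
      _ ≤ 2 * ‖z - 1‖ ^ 2 := by nlinarith [sq_nonneg ‖z - 1‖]
  · calc ‖z - exp (z - 1)‖ ≤ ‖z‖ + ‖exp (z - 1)‖ := norm_sub_le _ _
      _ ≤ 2 := by linarith [norm_exp_sub_one_le_one hz]
      _ ≤ 2 * ‖z - 1‖ ^ 2 := by nlinarith

theorem norm_pow_sub_exp_le {z : ℂ} (hz : ‖z‖ ≤ 1) (n : ℕ) :
    ‖z ^ n - exp (n * (z - 1))‖ ≤ 2 * n * ‖z - 1‖ ^ 2 := by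
  rw [exp_nat_mul]
  calc ‖z ^ n - exp (z - 1) ^ n‖ ≤ n * ‖z - exp (z - 1)‖ :=
        norm_pow_sub_pow_le_mul_norm_sub hz (norm_exp_sub_one_le_one hz) n
    _ ≤ n * (2 * ‖z - 1‖ ^ 2) := by gcongr; exact norm_sub_exp_sub_one_le hz
    _ = 2 * n * ‖z - 1‖ ^ 2 := by ring

theorem norm_one_sub_add_mul_le_one {q : ℝ} (hq0 : 0 ≤ q) (hq1 : q ≤ 1) {w : ℂ} (hw : ‖w‖ ≤ 1) :
    ‖((1 - q : ℝ) : ℂ) + (q : ℂ) * w‖ ≤ 1 := by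
  calc ‖((1 - q : ℝ) : ℂ) + (q : ℂ) * w‖ ≤ (1 - q) + q * ‖w‖ := by
        refine (norm_add_le _ _).trans ?_
        rw [norm_mul, norm_real, norm_real, Real.norm_of_nonneg (sub_nonneg.2 hq1),
          Real.norm_of_nonneg hq0]
    _ ≤ 1 := by nlinarith

theorem norm_mixture_pow_sub_exp_le {ι : Type*} [Fintype ι] {P a : ι → ℝ} {φ : ι → ℂ} {n : ℕ}
    (hn : 0 < n) (hP0 : ∀ i, 0 ≤ P i) (hP1 : ∑ i, P i = 1) (ha0 : ∀ i, 0 ≤ a i)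
    (han : ∀ i, a i ≤ n) (hφ : ∀ i, ‖φ i‖ ≤ 1) :
    ‖(∑ i, (P i : ℂ) * (((1 - a i / n : ℝ) : ℂ) + ((a i / n : ℝ) : ℂ) * φ i)) ^ n
        - exp (∑ i, (P i : ℂ) * (a i : ℂ) * (φ i - 1))‖
      ≤ 8 * (∑ i, P i * a i) ^ 2 / n := by
  have hn' : (0 : ℝ) < n := Nat.cast_pos.2 hn
  have hnc : (n : ℂ) ≠ 0 := Nat.cast_ne_zero.2 hn.ne'
  set z := ∑ i, (P i : ℂ) * (((1 - a i / n : ℝ) : ℂ) + ((a i / n : ℝ) : ℂ) * φ i)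
  have hz : ‖z‖ ≤ 1 := by
    refine (norm_sum_le _ _).trans ?_
    calc ∑ i, ‖(P i : ℂ) * (((1 - a i / n : ℝ) : ℂ) + ((a i / n : ℝ) : ℂ) * φ i)‖
        ≤ ∑ i, P i * 1 := by
          refine Finset.sum_le_sum fun i _ => ?_
          rw [norm_mul, norm_real, Real.norm_of_nonneg (hP0 i)]
          gcongr
          · exact hP0 i
          · exact norm_one_sub_add_mul_le_one (div_nonneg (ha0 i) hn'.le)
              ((div_le_one hn').2 (han i)) (hφ i)
      _ = 1 := by simp [hP1]
  have hz1 : z - 1 = (∑ i, (P i : ℂ) * (a i : ℂ) * (φ i - 1)) / n := by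
    have hPc : ∑ i, (P i : ℂ) = 1 := by exact_mod_cast hP1
    calc z - 1 = z - ∑ i, (P i : ℂ) := by rw [hPc]
      _ = _ := by
        rw [eq_div_iff hnc, ← Finset.sum_sub_distrib, Finset.sum_mul]
        refine Finset.sum_congr rfl fun i _ => ?_
        push_cast
        field_simp
        ring
  have hz1_norm : ‖z - 1‖ ≤ 2 * (∑ i, P i * a i) / n := by
    rw [hz1, norm_div, norm_natCast, Finset.mul_sum]
    gcongr
    refine (norm_sum_le _ _).trans (Finset.sum_le_sum fun i _ => ?_)
    rw [norm_mul, norm_mul, norm_real, norm_real, Real.norm_of_nonneg (hP0 i),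
      Real.norm_of_nonneg (ha0 i)]
    have : ‖φ i - 1‖ ≤ 2 := (norm_sub_le _ _).trans (by simp [hφ i, one_add_one_eq_two.symm])
    nlinarith [mul_nonneg (hP0 i) (ha0 i)]
  have hexp : ∑ i, (P i : ℂ) * (a i : ℂ) * (φ i - 1) = n * (z - 1) := by
    rw [hz1, mul_div_cancel₀ _ hnc]
  rw [hexp]
  calc ‖z ^ n - exp (n * (z - 1))‖ ≤ 2 * n * ‖z - 1‖ ^ 2 := norm_pow_sub_exp_le hz n
    _ ≤ 2 * n * (2 * (∑ i, P i * a i) / n) ^ 2 := by gcongr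
    _ = 8 * (∑ i, P i * a i) ^ 2 / n := by field_simp; ring

theorem norm_exp_I_mul_ofReal_mul_ofReal (k x : ℝ) : ‖exp (I * k * x)‖ = 1 := by
  rw [mul_assoc, ← ofReal_mul, norm_exp_I_mul_ofReal]

end Complex

instance : IsProbabilityMeasure unif01 :=
  ⟨by simp [unif01, Real.volume_Icc]⟩

theorem unif01_real_Iic {p : ℝ} (hp0 : 0 ≤ p) (hp1 : p ≤ 1) : unif01.real (Set.Iic p) = p := by
  have hinter : Set.Iic p ∩ Set.Icc 0 1 = Set.Icc 0 p := by
    ext x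
    simp only [Set.mem_inter_iff, Set.mem_Iic, Set.mem_Icc]
    grind
  rw [unif01, measureReal_restrict_apply measurableSet_Iic, hinter, Real.volume_real_Icc_of_le hp0,
    sub_zero]

theorem integral_unif01_prod_ite_mul {E : Type*} [NormedAddCommGroup E] [NormedSpace ℝ E]
    [CompleteSpace E] {m : Measure ℝ} [IsProbabilityMeasure m] {h : ℝ → E} (hh : Integrable h m)
    {p : ℝ} (hp0 : 0 ≤ p) (hp1 : p ≤ 1) :
    ∫ q : ℝ × ℝ, h ((if q.1 ≤ p then 1 else 0) * q.2) ∂(unif01.prod m)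
      = (1 - p) • h 0 + p • ∫ x, h x ∂m := by
  set c : ℝ → ℝ := (Set.Iic p).indicator 1
  have hc : Integrable c unif01 := (integrable_const 1).indicator measurableSet_Iic
  set d : ℝ → ℝ := fun u => 1 - c u
  have hd : Integrable d unif01 := (integrable_const 1).sub hc
  have hsplit : ∀ q : ℝ × ℝ, h ((if q.1 ≤ p then 1 else 0) * q.2)
      = c q.1 • h q.2 + d q.1 • h 0 := by
    rintro ⟨u, x⟩
    by_cases hu : u ≤ p <;> simp [c, d, hu]
  have hc_int : ∫ u, c u ∂unif01 = p := by
    rw [integral_indicator_one measurableSet_Iic, unif01_real_Iic hp0 hp1]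
  rw [integral_congr_ae (.of_forall hsplit),
    integral_add (hc.smul_prod hh) (hd.smul_prod (integrable_const _)),
    integral_prod_smul, integral_smul_const, integral_fun_fst, integral_sub (integrable_const 1) hc,
    hc_int]
  simp [add_comm]

theorem coordLaw_eq_sum (M : ℕ) (P : Fin M → ℝ) (ν : Fin M → Fin M → Measure ℝ) (t : Fin M) :
    coordLaw M P ν t = ∑ s, ENNReal.ofReal (P s) •
      (unif01.prod (ν s t)).map (fun p : ℝ × ℝ => (s, p)) := by
  ext A hA
  rw [coordLaw, Measure.bind_apply hA (measurable_of_countable _).aemeasurable, typeMeasure,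
    lintegral_finsetSum_measure, Measure.finsetSum_apply]
  simp [lintegral_smul_measure, lintegral_dirac]

theorem isProbabilityMeasure_coordLaw {M : ℕ} {P : Fin M → ℝ} (hP0 : ∀ s, 0 ≤ P s)
    (hP1 : ∑ s, P s = 1) {ν : Fin M → Fin M → Measure ℝ} {t : Fin M}
    [∀ s, IsProbabilityMeasure (ν s t)] : IsProbabilityMeasure (coordLaw M P ν t) := by
  constructor
  rw [coordLaw_eq_sum, Measure.finsetSum_apply]
  simp only [Measure.smul_apply, Measure.map_apply measurable_prodMk_left MeasurableSet.univ,
    Set.preimage_univ, measure_univ, smul_eq_mul, mul_one]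
  rw [← ENNReal.ofReal_sum_of_nonneg fun s _ => hP0 s, hP1, ENNReal.ofReal_one]

theorem integral_coordLaw {E : Type*} [NormedAddCommGroup E] [NormedSpace ℝ E]
    {M : ℕ} {P : Fin M → ℝ} (hP0 : ∀ s, 0 ≤ P s) {ν : Fin M → Fin M → Measure ℝ} {t : Fin M}
    {g : Fin M × ℝ × ℝ → E} (hg : Integrable g (coordLaw M P ν t)) :
    ∫ q, g q ∂(coordLaw M P ν t) = ∑ s, P s • ∫ p, g (s, p) ∂(unif01.prod (ν s t)) := by
  rw [coordLaw_eq_sum] at hg ⊢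
  rw [integral_finsetSum_measure ((integrable_finsetSum_measure).1 hg)]
  refine Finset.sum_congr rfl fun s _ => ?_
  rw [integral_smul_measure, (measurableEmbedding_prodMk_left s).integral_map,
    ENNReal.toReal_ofReal (hP0 s)]

theorem integral_prod_eq_pow_of_map_eq_pi {Ω α ι 𝕜 : Type*} [MeasurableSpace Ω]
    [MeasurableSpace α] [Fintype ι] [RCLike 𝕜] {μ : Measure Ω} {ν : Measure α}
    [IsProbabilityMeasure ν] {Φ : Ω → ι → α} (hΦ : μ.map Φ = Measure.pi fun _ => ν)
    {g : α → 𝕜} (hg : Measurable g) :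
    ∫ ω, ∏ i, g (Φ ω i) ∂μ = (∫ x, g x ∂ν) ^ Fintype.card ι := by
  have hΦm : AEMeasurable Φ μ :=
    .of_map_ne_zero (hΦ ▸ IsProbabilityMeasure.ne_zero _)
  have hF : Measurable fun y : ι → α => ∏ i, g (y i) :=
    Finset.measurable_prod _ fun i _ => hg.comp (measurable_pi_apply i)
  rw [← integral_fintype_prod_eq_pow, ← hΦ, integral_map hΦm hF.aestronglyMeasurable]

theorem integral_exp_I_mul_eq_charFun (μ : Measure ℝ) (k : ℝ) :
    ∫ x, Complex.exp (Complex.I * k * x) ∂μ = charFun μ k := by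
  simp only [charFun_apply_real]
  congr with x
  congr 1
  ring

noncomputable def thinnedPhase {M : ℕ} (r : Fin M → ℝ) (k : ℝ) (q : Fin M × ℝ × ℝ) : ℂ :=
  Complex.exp (Complex.I * k * (((if q.2.1 ≤ r q.1 then 1 else 0) * q.2.2 : ℝ) : ℂ))

theorem measurable_thinnedPhase {M : ℕ} (r : Fin M → ℝ) (k : ℝ) :
    Measurable (thinnedPhase r k) := by
  refine (by fun_prop : Measurable fun x : ℝ => Complex.exp (Complex.I * k * x)).comp ?_
  exact (Measurable.ite (measurableSet_le (measurable_fst.comp measurable_snd)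
      ((measurable_of_countable r).comp measurable_fst)) measurable_const measurable_const).mul
    (measurable_snd.comp measurable_snd)

theorem integral_coordLaw_thinnedPhase {M : ℕ} {P : Fin M → ℝ} (hP0 : ∀ s, 0 ≤ P s)
    (hP1 : ∑ s, P s = 1) {ν : Fin M → Fin M → Measure ℝ} {t : Fin M}
    [∀ s, IsProbabilityMeasure (ν s t)] {r : Fin M → ℝ} (hr0 : ∀ s, 0 ≤ r s)
    (hr1 : ∀ s, r s ≤ 1) (k : ℝ) :
    ∫ q, thinnedPhase r k q ∂(coordLaw M P ν t)
      = ∑ s, (P s : ℂ) * (((1 - r s : ℝ) : ℂ) + (r s : ℂ) * charFun (ν s t) k) := by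
  have := isProbabilityMeasure_coordLaw (ν := ν) (t := t) hP0 hP1
  have hbound : ∀ x : ℝ, ‖Complex.exp (Complex.I * k * x)‖ ≤ 1 := fun x =>
    (Complex.norm_exp_I_mul_ofReal_mul_ofReal k x).le
  rw [integral_coordLaw hP0 (.of_bound (measurable_thinnedPhase _ k).aestronglyMeasurable 1
    (.of_forall fun q => hbound _))]
  refine Finset.sum_congr rfl fun s _ => ?_
  have hint : Integrable (fun x : ℝ => Complex.exp (Complex.I * k * x)) (ν s t) :=
    .of_bound (by fun_prop) 1 (.of_forall hbound)
  simp only [thinnedPhase]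
  rw [integral_unif01_prod_ite_mul hint (hr0 s) (hr1 s), integral_exp_I_mul_eq_charFun]
  simp only [Complex.ofReal_zero, mul_zero, Complex.exp_zero, Complex.real_smul, mul_one,
    smul_add]
  ring

theorem stmt4_general
    (M : ℕ)
    (P : Fin M → ℝ) (hP0 : ∀ s, 0 ≤ P s) (hP1 : ∑ s, P s = 1)
    (κ : Fin M → Fin M → ℝ) (hκ0 : ∀ s s', 0 ≤ κ s s') :
    ∃ C : ℝ, ∀ (N : ℕ), 2 ≤ N → (∀ s s', κ s s' ≤ (N : ℝ) - 1) →
    ∀ (ν : Fin M → Fin M → Measure ℝ), (∀ s s', IsProbabilityMeasure (ν s s')) →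
    (∀ s s', ν s s' (Set.Iic (0:ℝ)) = 0) →
    ∀ (Ω : Type) (_ : MeasurableSpace Ω) (μ : Measure Ω), IsProbabilityMeasure μ →
    ∀ (t : Fin M) (T : Fin (N - 1) → Ω → Fin M) (U O : Fin (N - 1) → Ω → ℝ),
    -- the triples `(T_w, U_w, Ω_{w1})`, `w = 2,…,N`, are i.i.d. with law `coordLaw`:
    (Measure.map (fun ω => fun w : Fin (N - 1) => (T w ω, U w ω, O w ω)) μ
      = Measure.pi (fun _ : Fin (N - 1) => coordLaw M P ν t)) →
    ∀ k : ℝ,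
    ‖((∫ ω, Complex.exp (Complex.I * (k : ℂ) *
          ((∑ w : Fin (N - 1),
            (if U w ω ≤ κ (T w ω) t / ((N : ℝ) - 1) then (1:ℝ) else 0) * O w ω) : ℝ)) ∂μ)
        - Complex.exp (∑ t' : Fin M, (P t' : ℂ) * (κ t' t : ℂ)
            * ((∫ x, Complex.exp (Complex.I * (k : ℂ) * (x : ℂ)) ∂(ν t' t)) - 1)))‖
      ≤ C / ((N : ℝ) - 1) := by
  refine ⟨8 * (∑ s, ∑ s', P s * κ s s') ^ 2, ?_⟩
  intro N hN hκN ν hν _ Ω _ μ _ t T U O hmap k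
  have hn : 0 < N - 1 := by omega
  have hcast : ((N - 1 : ℕ) : ℝ) = (N : ℝ) - 1 := by rw [Nat.cast_sub (by omega), Nat.cast_one]
  have hN1 : (0 : ℝ) < (N : ℝ) - 1 := hcast ▸ Nat.cast_pos.2 hn
  have := fun s => hν s t
  have := isProbabilityMeasure_coordLaw (ν := ν) (t := t) hP0 hP1
  have hsum : ∀ ω, Complex.exp (Complex.I * k * ((∑ w : Fin (N - 1),
      (if U w ω ≤ κ (T w ω) t / ((N : ℝ) - 1) then (1:ℝ) else 0) * O w ω : ℝ) : ℂ))
      = ∏ w, thinnedPhase (κ · t / ((N : ℝ) - 1)) k (T w ω, U w ω, O w ω) := fun ω => by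
    rw [Complex.ofReal_sum, Finset.mul_sum, Complex.exp_sum]
    rfl
  simp_rw [hsum, integral_exp_I_mul_eq_charFun]
  rw [integral_prod_eq_pow_of_map_eq_pi hmap (measurable_thinnedPhase _ k), Fintype.card_fin,
    integral_coordLaw_thinnedPhase hP0 hP1 (fun s => div_nonneg (hκ0 s t) hN1.le)
      (fun s => (div_le_one hN1).2 (hκN s t))]
  have hmix := Complex.norm_mixture_pow_sub_exp_le hn hP0 hP1 (fun s => hκ0 s t)
    (fun s => hcast ▸ hκN s t) fun s => norm_charFun_le_one (μ := ν s t) k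
  rw [hcast] at hmix
  refine hmix.trans ?_
  have hκt : ∑ s, P s * κ s t ≤ ∑ s, ∑ s', P s * κ s s' := Finset.sum_le_sum fun s _ =>
    Finset.single_le_sum (f := fun s' => P s * κ s s') (fun s' _ => mul_nonneg (hP0 s) (hκ0 s s'))
      (Finset.mem_univ t)
  gcongr
  exact Finset.sum_nonneg fun s _ => mul_nonneg (hP0 s) (hκ0 s t)

/-- There is a constant `C = C(M,P,κ)`, not depending on `N`, `k` or `t`,
such that the characteristic function `f_X^{(N)}(k∣t)` of the interbank debt
`X̄₁ = Σ_{w=2}^N I_{w1} Ω_{w1}` satisfies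
`|f_X^{(N)}(k∣t) − exp(Σ_{t'} P(t')κ(t',t)(f_Ω(k∣t',t) − 1))| ≤ C/(N−1)`. -/
theorem stmt4
    (M : ℕ) (hM : 2 ≤ M)
    (P : Fin M → ℝ) (hP0 : ∀ s, 0 ≤ P s) (hP1 : ∑ s, P s = 1)
    (κ : Fin M → Fin M → ℝ) (hκ0 : ∀ s s', 0 ≤ κ s s') :
    ∃ C : ℝ, ∀ (N : ℕ), 2 ≤ N → (∀ s s', κ s s' ≤ (N : ℝ) - 1) →
    ∀ (ν : Fin M → Fin M → Measure ℝ), (∀ s s', IsProbabilityMeasure (ν s s')) →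
    (∀ s s', ν s s' (Set.Iic (0:ℝ)) = 0) →
    ∀ (Ω : Type) (_ : MeasurableSpace Ω) (μ : Measure Ω), IsProbabilityMeasure μ →
    ∀ (t : Fin M) (T : Fin (N - 1) → Ω → Fin M) (U O : Fin (N - 1) → Ω → ℝ),
    -- the triples `(T_w, U_w, Ω_{w1})`, `w = 2,…,N`, are i.i.d. with law `coordLaw`:
    (Measure.map (fun ω => fun w : Fin (N - 1) => (T w ω, U w ω, O w ω)) μ
      = Measure.pi (fun _ : Fin (N - 1) => coordLaw M P ν t)) →
    ∀ k : ℝ,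
    ‖((∫ ω, Complex.exp (Complex.I * (k : ℂ) *
          ((∑ w : Fin (N - 1),
            (if U w ω ≤ κ (T w ω) t / ((N : ℝ) - 1) then (1:ℝ) else 0) * O w ω) : ℝ)) ∂μ)
        - Complex.exp (∑ t' : Fin M, (P t' : ℂ) * (κ t' t : ℂ)
            * ((∫ x, Complex.exp (Complex.I * (k : ℂ) * (x : ℂ)) ∂(ν t' t)) - 1)))‖
      ≤ C / ((N : ℝ) - 1) :=
  stmt4_general M P hP0 hP1 κ hκ0
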